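/- For all real x ≥ 2 and y ≥ 2, |QNC(x, y)| ≤ (1/2) · (x^{-y} + y^{-x}). -/

import Mathlib

open Real

/-- `F(x,y) = ∑_{k=1}^∞ x^{k-1} · y^{-x^k} / (1 - y^{-x^k})²`. -/
noncomputable def F (x y : ℝ) : ℝ :=
  ∑' k : ℕ, x ^ (k : ℝ) * y ^ (-(x ^ ((k : ℝ) + 1))) / (1 - y ^ (-(x ^ ((k : ℝ) + 1)))) ^ 2

/-- `QNC(x,y) = (1/(12xy)) · ( x(y-1)F(x,y) - y(x-1)F(y,x) )`. -/
noncomputable def QNC (x y : ℝ) : ℝ :=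
  1 / (12 * x * y) * (x * (y - 1) * F x y - y * (x - 1) * F y x)

/-! For `x, y ≥ 2` put `r = y^{-x}`. Since `2x ≤ 2^x`, we have `x r ≤ 1/2`. The `k`-th term of
`F(x,y)` is `x^k t / (1 - t)^2` with `t = y^{-x^{k+1}}`, and `x^{k+1} ≥ x (k+1)` gives
`t ≤ r^{k+1} ≤ 1/4`, so the term is at most `(16/9) x^k r^{k+1} ≤ (16/9) r 2^{-k}`. Summing the
geometric series, `0 ≤ F(x,y) ≤ (32/9) y^{-x}`; both terms of the difference defining `QNC` then
lie in `[0, (32/9) x y (x^{-y} + y^{-x})]`, so `|QNC(x,y)| ≤ (8/27) (x^{-y} + y^{-x})`. -/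

lemma two_mul_le_two_rpow {x : ℝ} (hx : 2 ≤ x) : 2 * x ≤ 2 ^ x := by
  have bernoulli := one_add_mul_self_le_rpow_one_add (s := 1) (by norm_num) (p := x - 1)
    (by linarith)
  rw [show x = 1 + (x - 1) by ring, rpow_add two_pos, rpow_one]
  norm_num at bernoulli ⊢
  linarith

lemma mul_rpow_neg_le_half {x y : ℝ} (hx : 2 ≤ x) (hy : 2 ≤ y) : x * y ^ (-x) ≤ 1 / 2 := by
  rw [rpow_neg (by linarith)]
  calc x * (y ^ x)⁻¹ ≤ x * (2 ^ x)⁻¹ := by gcongr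
    _ ≤ 1 / 2 := by
      rw [← div_eq_mul_inv, div_le_iff₀ (by positivity)]
      linarith [two_mul_le_two_rpow hx]

lemma mul_succ_le_pow_succ {x : ℝ} (hx : 2 ≤ x) (k : ℕ) : x * (k + 1) ≤ x ^ (k + 1) := by
  have bernoulli : 1 + k * (x - 1) ≤ x ^ k := by
    simpa using one_add_mul_le_pow (a := x - 1) (by linarith) k
  have hk : (k : ℝ) + 1 ≤ 1 + k * (x - 1) := by nlinarith [(k.cast_nonneg : (0 : ℝ) ≤ k)]
  rw [pow_succ']
  gcongr
  linarith

lemma rpow_neg_rpow_succ_le {x y : ℝ} (hx : 2 ≤ x) (hy : 1 ≤ y) (k : ℕ) :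
    y ^ (-x ^ ((k : ℝ) + 1)) ≤ (y ^ (-x)) ^ (k + 1) := by
  have hpow : x ^ ((k : ℝ) + 1) = x ^ (k + 1) := by exact_mod_cast rpow_natCast x (k + 1)
  rw [← rpow_mul_natCast (by linarith), hpow]
  apply rpow_le_rpow_of_exponent_le hy
  push_cast
  linarith [mul_succ_le_pow_succ hx k]

lemma div_one_sub_sq_le {t : ℝ} (h0 : 0 ≤ t) (h : t ≤ 1 / 4) : t / (1 - t) ^ 2 ≤ 16 / 9 * t := by
  have hden : 9 / 16 ≤ (1 - t) ^ 2 := by nlinarith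
  rw [div_le_iff₀ (by linarith)]
  nlinarith [mul_le_mul_of_nonneg_left hden h0]

noncomputable def FTerm (x y : ℝ) (k : ℕ) : ℝ :=
  x ^ (k : ℝ) * y ^ (-(x ^ ((k : ℝ) + 1))) / (1 - y ^ (-(x ^ ((k : ℝ) + 1)))) ^ 2

lemma F_eq_tsum_FTerm (x y : ℝ) : F x y = ∑' k, FTerm x y k := rfl

lemma FTerm_nonneg {x y : ℝ} (hx : 0 ≤ x) (hy : 0 ≤ y) (k : ℕ) : 0 ≤ FTerm x y k := by
  unfold FTerm
  positivity

lemma FTerm_le {x y : ℝ} (hx : 2 ≤ x) (hy : 2 ≤ y) (k : ℕ) :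
    FTerm x y k ≤ 16 / 9 * y ^ (-x) * (1 / 2) ^ k := by
  set r := y ^ (-x)
  set t := y ^ (-x ^ ((k : ℝ) + 1))
  have hr0 : 0 ≤ r := rpow_nonneg (by linarith) _
  have hxr : x * r ≤ 1 / 2 := mul_rpow_neg_le_half hx hy
  have hr : r ≤ 1 / 4 := by nlinarith
  have ht : t ≤ r ^ (k + 1) := rpow_neg_rpow_succ_le hx (by linarith) k
  have ht0 : 0 ≤ t := rpow_nonneg (by linarith) _
  have ht4 : t ≤ 1 / 4 := ht.trans <| (pow_le_of_le_one hr0 (by linarith) k.succ_ne_zero).trans hr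
  calc FTerm x y k = x ^ (k : ℝ) * (t / (1 - t) ^ 2) := mul_div_assoc _ _ _
    _ ≤ x ^ (k : ℝ) * (16 / 9 * r ^ (k + 1)) := by
      gcongr
      exact (div_one_sub_sq_le ht0 ht4).trans (by gcongr)
    _ = 16 / 9 * r * (x * r) ^ k := by rw [rpow_natCast]; ring
    _ ≤ 16 / 9 * r * (1 / 2) ^ k := by gcongr

lemma F_nonneg {x y : ℝ} (hx : 0 ≤ x) (hy : 0 ≤ y) : 0 ≤ F x y := by
  rw [F_eq_tsum_FTerm]
  exact tsum_nonneg (FTerm_nonneg hx hy)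

lemma F_le {x y : ℝ} (hx : 2 ≤ x) (hy : 2 ≤ y) : F x y ≤ 32 / 9 * y ^ (-x) := by
  have hg : Summable fun k : ℕ => 16 / 9 * y ^ (-x) * (1 / 2 : ℝ) ^ k :=
    summable_geometric_two.mul_left _
  have hf : Summable (FTerm x y) :=
    hg.of_nonneg_of_le (FTerm_nonneg (by linarith) (by linarith)) (FTerm_le hx hy)
  rw [F_eq_tsum_FTerm]
  calc ∑' k, FTerm x y k ≤ ∑' k : ℕ, 16 / 9 * y ^ (-x) * (1 / 2 : ℝ) ^ k :=
        hf.tsum_le_tsum (FTerm_le hx hy) hg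
    _ = 32 / 9 * y ^ (-x) := by rw [tsum_mul_left, tsum_geometric_two]; ring

lemma mul_sub_one_mul_F_nonneg {x y : ℝ} (hx : 0 ≤ x) (hy : 1 ≤ y) :
    0 ≤ x * (y - 1) * F x y := by
  have := F_nonneg hx (by linarith : 0 ≤ y)
  have : 0 ≤ y - 1 := by linarith
  positivity

lemma mul_sub_one_mul_F_le {x y : ℝ} (hx : 2 ≤ x) (hy : 2 ≤ y) :
    x * (y - 1) * F x y ≤ x * y * (32 / 9 * y ^ (-x)) := by
  have := F_nonneg (by linarith : 0 ≤ x) (by linarith : 0 ≤ y)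
  calc x * (y - 1) * F x y ≤ x * y * F x y := by gcongr; linarith
    _ ≤ x * y * (32 / 9 * y ^ (-x)) := by gcongr; exact F_le hx hy

/-- For all real `x ≥ 2` and `y ≥ 2`,
`|QNC(x,y)| ≤ (1/2)(x^{-y} + y^{-x})`. -/
theorem abs_QNC_le (x y : ℝ) (hx : 2 ≤ x) (hy : 2 ≤ y) :
    |QNC x y| ≤ 1 / 2 * (x ^ (-y) + y ^ (-x)) := by
  have hx0 : 0 < x := by linarith
  have hy0 : 0 < y := by linarith
  have hdiff : |x * (y - 1) * F x y - y * (x - 1) * F y x|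
      ≤ x * y * (32 / 9 * (x ^ (-y) + y ^ (-x))) :=
    abs_sub_le_of_nonneg_of_le
      (mul_sub_one_mul_F_nonneg hx0.le (by linarith))
      ((mul_sub_one_mul_F_le hx hy).trans
        (by gcongr; exact le_add_of_nonneg_left (by positivity)))
      (mul_sub_one_mul_F_nonneg hy0.le (by linarith))
      ((mul_sub_one_mul_F_le hy hx).trans
        (by rw [mul_comm y x]; gcongr; exact le_add_of_nonneg_right (by positivity)))
  calc |QNC x y| = 1 / (12 * x * y) * |x * (y - 1) * F x y - y * (x - 1) * F y x| := by
        rw [QNC, abs_mul, abs_of_pos (by positivity)]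
    _ ≤ 1 / (12 * x * y) * (x * y * (32 / 9 * (x ^ (-y) + y ^ (-x)))) := by gcongr
    _ = 8 / 27 * (x ^ (-y) + y ^ (-x)) := by field_simp; ring
    _ ≤ 1 / 2 * (x ^ (-y) + y ^ (-x)) := by
      exact mul_le_mul_of_nonneg_right (by norm_num) (by positivity)
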